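/- Given a Szegő system, the sequences n ↦ |φ^#_{σ(n)}(0)|^{−2} and n ↦ (∑_{τ ⪯ σ(n)} |φ_τ(0)|²)^{−1} both converge, as n → ∞, to the unconditional infinite product ∏_{σ ∈ F_d^+} (1 − |γ_σ|²) (the limit of the net of products over finite subsets of F_d^+, which exists since every factor lies in (0,1]; this limit equals 0 when the product diverges). -/

import Mathlib

open scoped BigOperators

/-- The shortlex (length-then-lexicographic) order on words in `F_d^+`. -/
def ShortlexLE {d : ℕ} (σ τ : List (Fin d)) : Prop :=
  σ.length < τ.length ∨ (σ.length = τ.length ∧ (σ = τ ∨ List.Lex (· < ·) σ τ))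

/-- The defect `d_σ := √(1 - |γ_σ|²)`. -/
noncomputable def defect {d : ℕ} (γ : List (Fin d) → ℂ) (σ : List (Fin d)) : ℝ :=
  Real.sqrt (1 - ‖γ σ‖ ^ 2)

/-- A Szegő system: Verblunsky coefficients `γ : F_d^+ → ℂ` with `γ_∅ = 0`, `|γ_σ| < 1`,
together with families of noncommutative polynomials `φ, φr (= φ^#)` with `φ_∅ = φ^#_∅ = 1`
satisfying the Szegő recurrences, where `e : ℕ ≃ F_d^+` is the shortlex order isomorphism and
`τ - 1 := e (e⁻¹ τ - 1)` is the immediate shortlex predecessor. -/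
structure SzegoSystem (d : ℕ) where
  /-- the shortlex enumeration of `F_d^+` -/
  e : ℕ ≃ List (Fin d)
  /-- `e` is an order isomorphism onto the shortlex order -/
  he : ∀ m n : ℕ, m ≤ n ↔ ShortlexLE (e m) (e n)
  /-- the Verblunsky coefficients -/
  γ : List (Fin d) → ℂ
  hγ0 : γ [] = 0
  hγlt : ∀ σ : List (Fin d), ‖γ σ‖ < 1
  /-- the orthonormal polynomials -/
  φ : List (Fin d) → FreeAlgebra ℂ (Fin d)
  /-- the reverse polynomials `φ^#` -/
  φr : List (Fin d) → FreeAlgebra ℂ (Fin d)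
  hφ0 : φ [] = 1
  hφr0 : φr [] = 1
  recφ : ∀ (k : Fin d) (σ : List (Fin d)),
    φ (k :: σ) = (((defect γ (k :: σ) : ℝ) : ℂ))⁻¹ •
      (FreeAlgebra.ι ℂ k * φ σ - γ (k :: σ) • φr (e (e.symm (k :: σ) - 1)))
  recφr : ∀ (k : Fin d) (σ : List (Fin d)),
    φr (k :: σ) = (((defect γ (k :: σ) : ℝ) : ℂ))⁻¹ •
      ((-(starRingEnd ℂ (γ (k :: σ)))) • (FreeAlgebra.ι ℂ k * φ σ) +
        φr (e (e.symm (k :: σ) - 1)))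

/-- Evaluation of a noncommutative polynomial at `0` (the constant coefficient). -/
noncomputable def evalZero (d : ℕ) : FreeAlgebra ℂ (Fin d) →ₐ[ℂ] ℂ :=
  FreeAlgebra.lift ℂ (fun _ : Fin d => (0 : ℂ))

/-- The shortlex-largest word of length `n`: the largest generator repeated `n` times. -/
def sigmaWord (d : ℕ) (hd : 1 ≤ d) (n : ℕ) : List (Fin d) :=
  List.replicate n (⟨d - 1, by omega⟩ : Fin d)

/-!
Evaluating the Szegő recurrences at `Z = 0` kills the terms `Z_k φ_σ`, so along the shortlex
enumeration `φ^#_{e(n+1)}(0) = φ^#_{e n}(0) / d_{e(n+1)}` and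
`φ_{e(n+1)}(0) = -γ_{e(n+1)} φ^#_{e n}(0) / d_{e(n+1)}`. Hence `|φ^#_{e n}(0)|⁻²` is the partial
product `P_n = ∏_{j ≤ n} (1 - |γ_{e j}|²)`, and `|φ_{e(n+1)}(0)|² = P_{n+1}⁻¹ - P_n⁻¹` telescopes,
so the sum of `|φ_τ(0)|²` over `τ ⪯ e n` is `P_n⁻¹` as well. Factors in `(0, 1]` make the product
multipliable, and `e⁻¹(σ(n)) → ∞` because every word of length at most `n` precedes `σ(n)`.
-/

open Filter Finset

theorem multipliable_of_nonneg_of_le_one {ι R : Type*} [ConditionallyCompleteLinearOrder R]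
    [CommSemiring R] [IsStrictOrderedRing R] [TopologicalSpace R] [OrderTopology R]
    {f : ι → R} (h₀ : ∀ i, 0 ≤ f i) (h₁ : ∀ i, f i ≤ 1) : Multipliable f :=
  ⟨_, tendsto_atTop_ciInf (prod_anti_set_of_le_one h₀ h₁)
    ⟨0, by rintro _ ⟨s, rfl⟩; exact prod_nonneg fun i _ ↦ h₀ i⟩⟩

theorem evalZero_ι {d : ℕ} (k : Fin d) : evalZero d (FreeAlgebra.ι ℂ k) = 0 := by
  simp [evalZero]

theorem lex_le_sigmaWord {d : ℕ} (hd : 1 ≤ d) (σ : List (Fin d)) :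
    σ = sigmaWord d hd σ.length ∨ List.Lex (· < ·) σ (sigmaWord d hd σ.length) := by
  induction σ with
  | nil => exact Or.inl rfl
  | cons a σ ih =>
    have hrep : sigmaWord d hd (a :: σ).length = ⟨d - 1, by omega⟩ :: sigmaWord d hd σ.length :=
      List.replicate_succ ..
    rw [hrep]
    have ha : a ≤ ⟨d - 1, by omega⟩ := Fin.le_iff_val_le_val.mpr (by have := a.isLt; dsimp; omega)
    rcases ha.lt_or_eq with ha | rfl
    · exact Or.inr (List.Lex.rel ha)
    · rcases ih with h | h
      · exact Or.inl (congrArg _ h)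
      · exact Or.inr (List.Lex.cons h)

theorem shortlexLE_sigmaWord {d : ℕ} (hd : 1 ≤ d) (σ : List (Fin d)) {n : ℕ}
    (hn : σ.length ≤ n) : ShortlexLE σ (sigmaWord d hd n) := by
  have hlen : (sigmaWord d hd n).length = n := List.length_replicate
  rcases hn.lt_or_eq with h | rfl
  · exact Or.inl (by omega)
  · exact Or.inr ⟨hlen.symm, lex_le_sigmaWord hd σ⟩

namespace SzegoSystem

variable {d : ℕ} (S : SzegoSystem d)

theorem one_sub_norm_γ_sq_pos (σ : List (Fin d)) : 0 < 1 - ‖S.γ σ‖ ^ 2 := by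
  have := S.hγlt σ
  nlinarith [norm_nonneg (S.γ σ)]

theorem one_sub_norm_γ_sq_le_one (σ : List (Fin d)) : 1 - ‖S.γ σ‖ ^ 2 ≤ 1 := by
  nlinarith [norm_nonneg (S.γ σ)]

theorem norm_defect_sq (σ : List (Fin d)) :
    ‖((defect S.γ σ : ℝ) : ℂ)‖ ^ 2 = 1 - ‖S.γ σ‖ ^ 2 := by
  rw [Complex.norm_real, defect, Real.norm_of_nonneg (Real.sqrt_nonneg _),
    Real.sq_sqrt (S.one_sub_norm_γ_sq_pos σ).le]

theorem e_zero : S.e 0 = [] := by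
  have h := (S.he 0 (S.e.symm [])).mp (Nat.zero_le _)
  rw [S.e.apply_symm_apply] at h
  rcases h with h | ⟨h, -⟩
  · simp at h
  · simpa using h

theorem exists_e_succ_eq_cons (n : ℕ) : ∃ k σ, S.e (n + 1) = k :: σ :=
  List.exists_cons_of_ne_nil fun h ↦ n.succ_ne_zero (S.e.injective (h.trans S.e_zero.symm))

theorem evalZero_φr_e_succ (n : ℕ) :
    evalZero d (S.φr (S.e (n + 1))) =
      ((defect S.γ (S.e (n + 1)) : ℝ) : ℂ)⁻¹ * evalZero d (S.φr (S.e n)) := by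
  obtain ⟨k, σ, h⟩ := S.exists_e_succ_eq_cons n
  have hpred : S.e.symm (k :: σ) - 1 = n := by rw [← h, S.e.symm_apply_apply, Nat.add_sub_cancel]
  rw [h, S.recφr k σ, hpred]
  simp [evalZero_ι]

theorem evalZero_φ_e_succ (n : ℕ) :
    evalZero d (S.φ (S.e (n + 1))) =
      -((defect S.γ (S.e (n + 1)) : ℝ) : ℂ)⁻¹ * S.γ (S.e (n + 1)) *
        evalZero d (S.φr (S.e n)) := by
  obtain ⟨k, σ, h⟩ := S.exists_e_succ_eq_cons n
  have hpred : S.e.symm (k :: σ) - 1 = n := by rw [← h, S.e.symm_apply_apply, Nat.add_sub_cancel]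
  rw [h, S.recφ k σ, hpred]
  simp [evalZero_ι]
  ring

noncomputable def partialProd (n : ℕ) : ℝ :=
  ∏ j ∈ range (n + 1), (1 - ‖S.γ (S.e j)‖ ^ 2)

theorem partialProd_zero : S.partialProd 0 = 1 := by
  simp [partialProd, e_zero, S.hγ0]

theorem partialProd_succ (n : ℕ) :
    S.partialProd (n + 1) = S.partialProd n * (1 - ‖S.γ (S.e (n + 1))‖ ^ 2) :=
  prod_range_succ ..

theorem partialProd_pos (n : ℕ) : 0 < S.partialProd n :=
  prod_pos fun _ _ ↦ S.one_sub_norm_γ_sq_pos _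

theorem norm_evalZero_φr_sq (n : ℕ) :
    ‖evalZero d (S.φr (S.e n))‖ ^ 2 = (S.partialProd n)⁻¹ := by
  induction n with
  | zero => simp [e_zero, S.hφr0, partialProd_zero]
  | succ n ih =>
    rw [evalZero_φr_e_succ, norm_mul, mul_pow, ih, norm_inv, inv_pow, norm_defect_sq,
      partialProd_succ, mul_inv, mul_comm]

theorem norm_evalZero_φ_succ_sq (n : ℕ) :
    ‖evalZero d (S.φ (S.e (n + 1)))‖ ^ 2 = (S.partialProd (n + 1))⁻¹ - (S.partialProd n)⁻¹ := by
  have hg := S.one_sub_norm_γ_sq_pos (S.e (n + 1))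
  have hP := S.partialProd_pos n
  rw [evalZero_φ_e_succ, norm_mul, norm_mul, norm_neg, norm_inv, mul_pow, mul_pow, inv_pow,
    norm_defect_sq, norm_evalZero_φr_sq, partialProd_succ]
  field_simp
  ring

theorem sum_norm_evalZero_φ_sq (n : ℕ) :
    ∑ j ∈ range (n + 1), ‖evalZero d (S.φ (S.e j))‖ ^ 2 = (S.partialProd n)⁻¹ := by
  rw [sum_range_succ', e_zero, S.hφ0]
  simp only [norm_evalZero_φ_succ_sq, sum_range_sub (fun j ↦ (S.partialProd j)⁻¹),
    partialProd_zero, map_one, norm_one]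
  ring

theorem tendsto_symm_sigmaWord (hd : 1 ≤ d) :
    Tendsto (fun n ↦ S.e.symm (sigmaWord d hd n)) atTop atTop :=
  tendsto_atTop.mpr fun b ↦ eventually_atTop.mpr ⟨(S.e b).length, fun n hn ↦ by
    rw [S.he, S.e.apply_symm_apply]
    exact shortlexLE_sigmaWord hd _ hn⟩

end SzegoSystem

/-- the sequences `n ↦ |φ^#_{σ(n)}(0)|⁻²` and
`n ↦ (∑_{τ ⪯ σ(n)} |φ_τ(0)|²)⁻¹` both converge, as `n → ∞`, to the unconditional infinite
product `∏_{σ ∈ F_d^+} (1 − |γ_σ|²)` (the limit of the net of finite partial products, which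
exists; it is `0` when the product diverges). -/
theorem tendsto_to_infinite_product {d : ℕ} (hd : 1 ≤ d) (S : SzegoSystem d) :
    HasProd (fun σ : List (Fin d) => 1 - ‖S.γ σ‖ ^ 2)
      (∏' σ : List (Fin d), (1 - ‖S.γ σ‖ ^ 2)) ∧
    Filter.Tendsto
      (fun n : ℕ => (‖evalZero d (S.φr (sigmaWord d hd n))‖ ^ 2)⁻¹)
      Filter.atTop
      (nhds (∏' σ : List (Fin d), (1 - ‖S.γ σ‖ ^ 2))) ∧
    Filter.Tendsto
      (fun n : ℕ =>
        (∑ j ∈ Finset.range (S.e.symm (sigmaWord d hd n) + 1),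
          ‖evalZero d (S.φ (S.e j))‖ ^ 2)⁻¹)
      Filter.atTop
      (nhds (∏' σ : List (Fin d), (1 - ‖S.γ σ‖ ^ 2))) := by
  have hprod : HasProd (fun σ : List (Fin d) => 1 - ‖S.γ σ‖ ^ 2) _ :=
    (multipliable_of_nonneg_of_le_one (fun σ ↦ (S.one_sub_norm_γ_sq_pos σ).le)
      S.one_sub_norm_γ_sq_le_one).hasProd
  have hpartial : Tendsto (fun n ↦ S.partialProd (S.e.symm (sigmaWord d hd n))) atTop
      (nhds (∏' σ : List (Fin d), (1 - ‖S.γ σ‖ ^ 2))) :=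
    ((S.e.hasProd_iff.mpr hprod).tendsto_prod_nat.comp (tendsto_add_atTop_nat 1)).comp
      (S.tendsto_symm_sigmaWord hd)
  refine ⟨hprod, hpartial.congr fun n ↦ ?_, hpartial.congr fun n ↦ ?_⟩
  · rw [← S.e.apply_symm_apply (sigmaWord d hd n), S.norm_evalZero_φr_sq, S.e.symm_apply_apply,
      inv_inv]
  · rw [S.sum_norm_evalZero_φ_sq, inv_inv]
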